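/- arXiv:2201.05941 — 3 statements merged into one kernel-verified Lean document; each statement's English description precedes it below -/
import Mathlib

section
/- Let F ⊆ L be differential fields of characteristic zero such that every constant of L (element x ∈ L with δ(x) = 0) lies in F, and let C denote the field of constants of L. Let n ≥ 1 and let Y ∈ GLₙ(L) have entries that are differentially algebraically independent over F, with L = F⟨entries of Y⟩. Set A = δ(Y)·Y⁻¹ (δ applied entrywise) and K = F⟨entries of A⟩. Then: (i) for every D ∈ GLₙ(C) there is a unique field automorphism σ_D of L commuting with δ, fixing F pointwise, and satisfying σ_D(Y) = Y·D (entrywise); (ii) each σ_D fixes K pointwise; (iii) every field automorphism of L that commutes with δ and fixes K pointwise equals σ_D for a unique D ∈ GLₙ(C); and (iv) the map D ↦ σ_D is a group isomorphism from GLₙ(C) onto the group of differential field automorphisms of L fixing K pointwise. (That is, the differential Galois group of L over K is GLₙ(C).) -/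
/-- `F⟨S⟩`: the smallest differential subfield of `L` containing the subfield `F` and the
set `S`, i.e. the subfield generated by `F` together with all iterated derivatives of
elements of `S`. -/
def diffAdjoin {L : Type*} [Field L] (δ : L → L) (F : Subfield L) (S : Set L) : Subfield L :=
  Subfield.closure (↑F ∪ {x | ∃ s ∈ S, ∃ m : ℕ, δ^[m] s = x})

/-- `IsGaugeAut δ F C Y D σ` says that `σ` is a differential field automorphism of `L`
over `F` sending the matrix `Y` to `Y·D`, where `D ∈ GLₙ(C)` has constant entries. -/
def IsGaugeAut {L : Type*} [Field L] (δ : L → L) (F : Subfield L) {n : ℕ}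
    (C : Subfield L) (Y : GL (Fin n) L) (D : GL (Fin n) C) (σ : L ≃+* L) : Prop :=
  (∀ x : L, σ (δ x) = δ (σ x)) ∧ (∀ x ∈ F, σ x = x) ∧
    (∀ i j : Fin n, σ (Y.val i j) = (Y.val * (D.val.map (fun c : C => (c : L)))) i j)

/-!
The derivatives `δ^[k] (Y i j)` are algebraically independent over `F` and generate `L`, so `L`
is a rational function field over `F` in them. For `D ∈ GLₙ(C)` the substitution `X ↦ X·D`,
made in every derivative order at once, therefore extends to an automorphism `σ_D` of `L`; it
commutes with `δ` because `D` is constant, and it is unique because a differential automorphism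
over `F` is determined by its value on `Y`.

The rest is about the logarithmic derivative `A = δ(Y)·Y⁻¹`. For invertible `W`,
`δ(YW)(YW)⁻¹ = A + Y·δ(W)·W⁻¹·Y⁻¹`, which equals `A` exactly when `W` is constant. Hence `σ_D`
fixes `A`, and so `K`; conversely an automorphism fixing `K` sends `Y` to a matrix with the same
logarithmic derivative, i.e. to `Y·D` with `D = Y⁻¹·σ(Y)` constant.
-/

namespace Derivation

def ofAddLeibniz {A : Type*} [CommRing A] (δ : A → A)
    (hadd : ∀ a b, δ (a + b) = δ a + δ b) (hmul : ∀ a b, δ (a * b) = a * δ b + δ a * b) :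
    Derivation ℤ A A :=
  mk' (AddMonoidHom.mk' δ hadd).toIntLinearMap fun a b => by
    simp [hmul, mul_comm]

theorem commute_of_closure_eq_top {R K : Type*} [CommRing R] [Field K] [Algebra R K]
    (d : Derivation R K K) {τ : K →+* K} {s : Set K} (hs : Subfield.closure s = ⊤)
    (h : ∀ x ∈ s, τ (d x) = d (τ x)) : Function.Commute τ d := by
  intro x
  induction (hs ▸ Subfield.mem_top x : x ∈ Subfield.closure s)
    using Subfield.closure_induction with
  | mem x hx => exact h x hx
  | one => simp
  | add x y _ _ hx hy => simp [hx, hy]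
  | neg x _ hx => simp [hx]
  | inv x _ hx => simp [leibniz_inv, hx]
  | mul x y _ _ hx hy => simp [leibniz, hx, hy]

variable {R A : Type*} [CommRing R] [CommRing A] [Algebra R A] (d : Derivation R A A)
  {n : Type*} [Fintype n]

theorem map_matrix_mul (M N : Matrix n n A) :
    (M * N).map d = M.map d * N + M * N.map d := by
  ext i j
  simp only [Matrix.map_apply, Matrix.mul_apply, Matrix.add_apply, map_sum, leibniz,
    smul_eq_mul, ← Finset.sum_add_distrib]
  exact Finset.sum_congr rfl fun _ _ => by ring

variable [DecidableEq n]

def matrixLogDeriv (Y : GL n A) : Matrix n n A := Y.val.map d * Y⁻¹.val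

theorem matrixLogDeriv_mul (Y W : GL n A) :
    d.matrixLogDeriv (Y * W) =
      d.matrixLogDeriv Y + Y.val * W.val.map d * W⁻¹.val * Y⁻¹.val := by
  simp only [matrixLogDeriv, Units.val_mul, mul_inv_rev, map_matrix_mul, add_mul,
    Matrix.mul_assoc]
  rw [← Matrix.mul_assoc W.val, W.mul_inv, Matrix.one_mul]

theorem matrixLogDeriv_mul_eq_iff (Y W : GL n A) :
    d.matrixLogDeriv (Y * W) = d.matrixLogDeriv Y ↔ W.val.map d = 0 := by
  rw [matrixLogDeriv_mul, add_eq_left]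
  constructor
  · intro h
    simpa [Matrix.mul_assoc] using congr(Y⁻¹.val * $h * Y.val * W.val)
  · intro h
    simp [h]

theorem matrixLogDeriv_map {S : Type*} [FunLike S A A] [RingHomClass S A A] {σ : S}
    (hσ : Function.Commute σ d) (Y : GL n A) :
    d.matrixLogDeriv (Matrix.GeneralLinearGroup.map (σ : A →+* A) Y) =
      (d.matrixLogDeriv Y).map σ := by
  simp only [matrixLogDeriv, Matrix.map_mul, ← map_inv]
  congr 1
  ext i j
  exact (hσ _).symm

end Derivation

section diffAdjoin

variable {L : Type*} [Field L] {δ : L → L} {F : Subfield L} {S : Set L}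

theorem le_diffAdjoin : F ≤ diffAdjoin δ F S :=
  fun _ hx => Subfield.subset_closure (Or.inl hx)

theorem subset_diffAdjoin : S ⊆ diffAdjoin δ F S :=
  fun s hs => Subfield.subset_closure (Or.inr ⟨s, hs, 0, rfl⟩)

theorem diffAdjoin_le_eqLocusField {σ τ : L →+* L} (hσ : Function.Commute σ δ)
    (hτ : Function.Commute τ δ) (hF : F ≤ σ.eqLocusField τ) (hS : S ⊆ σ.eqLocusField τ) :
    diffAdjoin δ F S ≤ σ.eqLocusField τ := by
  refine Subfield.closure_le.2 (Set.union_subset hF ?_)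
  rintro _ ⟨s, hs, m, rfl⟩
  change σ (δ^[m] s) = τ (δ^[m] s)
  rw [hσ.iterate_right m s, hτ.iterate_right m s, hS hs]

theorem toSubfield_adjoin_range_iterate {m n : Type*} (M : Matrix m n L) :
    (IntermediateField.adjoin F
      (Set.range fun p : (m × n) × ℕ => δ^[p.2] (M p.1.1 p.1.2))).toSubfield =
      diffAdjoin δ F {x | ∃ i j, M i j = x} := by
  rw [IntermediateField.adjoin_toSubfield, diffAdjoin]
  congr 2
  · exact Subtype.range_coe
  · ext x
    simp only [Set.mem_range, Set.mem_ofPred_eq, Prod.exists]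
    grind

end diffAdjoin

open MvPolynomial in
theorem AlgebraicIndependent.exists_algEquiv_aeval_eq {ι F L : Type*} [Field F] [Field L]
    [Algebra F L] {v : ι → L} (hv : AlgebraicIndependent F v)
    (htop : IntermediateField.adjoin F (Set.range v) = ⊤)
    (ψ : MvPolynomial ι F ≃ₐ[F] MvPolynomial ι F) :
    ∃ σ : L ≃ₐ[F] L, ∀ p, σ (aeval v p) = aeval v (ψ p) := by
  let e : FractionRing (MvPolynomial ι F) ≃ₐ[F] L :=
    hv.aevalEquivField.trans ((IntermediateField.equivOfEq htop).trans IntermediateField.topEquiv)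
  have he : ∀ p, e (algebraMap _ _ p) = aeval v p := hv.aevalEquivField_algebraMap_apply_coe
  refine ⟨e.symm.trans ((IsFractionRing.algEquivOfAlgEquiv ψ).trans e), fun p => ?_⟩
  simp [← he]

namespace MvPolynomial

variable {R : Type*} [CommRing R] {m n κ : Type*} [Fintype n]

/-- For each `k`, the variables `X ((i, j), k)` form an `m × n` matrix; this substitution
multiplies each of these matrices on the right by `M`. -/
noncomputable def rightMulSubst (M : Matrix n n R) :
    MvPolynomial ((m × n) × κ) R →ₐ[R] MvPolynomial ((m × n) × κ) R :=
  aeval fun p => ∑ l, C (M l p.1.2) * X ((p.1.1, l), p.2)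

theorem rightMulSubst_X (M : Matrix n n R) (p : (m × n) × κ) :
    rightMulSubst M (X p) = ∑ l, C (M l p.1.2) * X ((p.1.1, l), p.2) :=
  aeval_X _ _

theorem rightMulSubst_one [DecidableEq n] :
    rightMulSubst (m := m) (κ := κ) (1 : Matrix n n R) = AlgHom.id R _ := by
  refine algHom_ext fun p => ?_
  simp [rightMulSubst_X, Matrix.one_apply]

theorem rightMulSubst_mul (M N : Matrix n n R) :
    rightMulSubst (m := m) (κ := κ) (M * N) = (rightMulSubst M).comp (rightMulSubst N) := by
  refine algHom_ext fun p => ?_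
  simp only [AlgHom.comp_apply, rightMulSubst_X, map_sum, map_mul, Matrix.mul_apply, algHom_C,
    algebraMap_eq, Finset.sum_mul, Finset.mul_sum]
  rw [Finset.sum_comm]
  exact Finset.sum_congr rfl fun _ _ => Finset.sum_congr rfl fun _ _ => by ring

/-- For each `k`, the variables `X ((i, j), k)` form an `m × n` matrix; this substitution
multiplies each of these matrices on the right by `M`. -/
noncomputable def rightMulSubstEquiv [DecidableEq n] (M : GL n R) :
    MvPolynomial ((m × n) × κ) R ≃ₐ[R] MvPolynomial ((m × n) × κ) R :=
  AlgEquiv.ofAlgHom (rightMulSubst M.val) (rightMulSubst M⁻¹.val)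
    (by rw [← rightMulSubst_mul, M.mul_inv, rightMulSubst_one])
    (by rw [← rightMulSubst_mul, M.inv_mul, rightMulSubst_one])

end MvPolynomial

theorem Matrix.GeneralLinearGroup.exists_map_subtype_eq {n K : Type*} [Fintype n]
    [DecidableEq n] [Field K] (S : Subfield K) (M : GL n K) (hM : ∀ i j, M.val i j ∈ S) :
    ∃ D : GL n S, map S.subtype D = M := by
  let D : Matrix n n S := Matrix.of fun i j => ⟨M.val i j, hM i j⟩
  have hD : S.subtype.mapMatrix D = M.val := rfl
  have hdet : D.det ≠ 0 := fun h => M.det_ne_zero <| by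
    rw [← hD, ← RingHom.map_det, h, map_zero]
  exact ⟨mkOfDetNeZero D hdet, ext fun i j => rfl⟩

section GaugeAut

open Matrix.GeneralLinearGroup

variable {L R : Type*} [Field L] [CommRing R] [Algebra R L] {δ : L → L} {d : Derivation R L L}
  {F C : Subfield L} {n : ℕ} {Y : GL (Fin n) L} {D D' : GL (Fin n) C} {σ σ' : L ≃+* L}

theorem isGaugeAut_iff : IsGaugeAut δ F C Y D σ ↔
    Function.Commute σ δ ∧ (∀ x ∈ F, σ x = x) ∧ map (σ : L →+* L) Y = Y * map C.subtype D := by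
  simp [IsGaugeAut, Function.Commute, Function.Semiconj, Matrix.GeneralLinearGroup.ext_iff,
    Matrix.GeneralLinearGroup.map_apply]

theorem IsGaugeAut.unique_matrix (h : IsGaugeAut δ F C Y D σ) (h' : IsGaugeAut δ F C Y D' σ) :
    D = D' := by
  have hmap := (isGaugeAut_iff.1 h).2.2.symm.trans (isGaugeAut_iff.1 h').2.2
  refine ext fun i j => Subtype.ext ?_
  simpa [Matrix.GeneralLinearGroup.map_apply] using congr($(mul_left_cancel hmap).val i j)

theorem IsGaugeAut.unique_aut (hgen : diffAdjoin δ F {x | ∃ i j, Y.val i j = x} = ⊤)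
    (h : IsGaugeAut δ F C Y D σ) (h' : IsGaugeAut δ F C Y D σ') : σ = σ' := by
  refine RingEquiv.ext fun x => diffAdjoin_le_eqLocusField (σ := (σ : L →+* L))
    (τ := (σ' : L →+* L)) h.1 h'.1 (fun x hx => (h.2.1 x hx).trans (h'.2.1 x hx).symm) ?_
    (hgen ▸ Subfield.mem_top x)
  rintro _ ⟨i, j, rfl⟩
  exact (h.2.2 i j).trans (h'.2.2 i j).symm

theorem IsGaugeAut.trans (hCF : C ≤ F) (h : IsGaugeAut δ F C Y D σ)
    (h' : IsGaugeAut δ F C Y D' σ') : IsGaugeAut δ F C Y (D * D') (σ'.trans σ) := by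
  obtain ⟨hσ, hF, hY⟩ := isGaugeAut_iff.1 h
  obtain ⟨hσ', hF', hY'⟩ := isGaugeAut_iff.1 h'
  have hD' : map (σ : L →+* L) (map C.subtype D') = map C.subtype D' :=
    ext fun i j => hF _ (hCF (D'.val i j).2)
  refine isGaugeAut_iff.2 ⟨hσ.comp_left hσ', fun x hx => by simp [hF' x hx, hF x hx], ?_⟩
  change map (σ : L →+* L) (map (σ' : L →+* L) Y) = _
  rw [hY', map_mul, hD', hY, map_mul, mul_assoc]

theorem IsGaugeAut.fixes_diffAdjoin_matrixLogDeriv (hC : ∀ x ∈ C, d x = 0)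
    (h : IsGaugeAut d F C Y D σ) :
    ∀ x ∈ diffAdjoin d F {x | ∃ i j, d.matrixLogDeriv Y i j = x}, σ x = x := by
  obtain ⟨hσ, hF, hY⟩ := isGaugeAut_iff.1 h
  have hA : (d.matrixLogDeriv Y).map σ = d.matrixLogDeriv Y := by
    rw [← d.matrixLogDeriv_map hσ, hY, d.matrixLogDeriv_mul_eq_iff]
    ext i j
    exact hC _ (D.val i j).2
  intro x hx
  refine diffAdjoin_le_eqLocusField (σ := (σ : L →+* L)) (τ := RingHom.id L) hσ (fun _ => rfl)
    hF ?_ hx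
  rintro _ ⟨i, j, rfl⟩
  exact congr($hA i j)

theorem exists_isGaugeAut_of_fixes_diffAdjoin_matrixLogDeriv (hC : ∀ x, d x = 0 → x ∈ C)
    (hσ : Function.Commute σ d)
    (hfix : ∀ x ∈ diffAdjoin d F {x | ∃ i j, d.matrixLogDeriv Y i j = x}, σ x = x) :
    ∃ D, IsGaugeAut d F C Y D σ := by
  have hA : (d.matrixLogDeriv Y).map σ = d.matrixLogDeriv Y :=
    Matrix.ext fun i j => hfix _ (subset_diffAdjoin ⟨i, j, rfl⟩)
  have hW : (Y⁻¹ * map (σ : L →+* L) Y).val.map d = 0 := by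
    rw [← d.matrixLogDeriv_mul_eq_iff Y, mul_inv_cancel_left, d.matrixLogDeriv_map hσ, hA]
  obtain ⟨D, hD⟩ := exists_map_subtype_eq C _ fun i j => hC _ congr($hW i j)
  exact ⟨D, isGaugeAut_iff.2
    ⟨hσ, fun x hx => hfix x (le_diffAdjoin hx), by rw [hD, mul_inv_cancel_left]⟩⟩

theorem exists_isGaugeAut (hFδ : ∀ x ∈ F, d x ∈ F) (hC : ∀ x ∈ C, d x = 0) (hCF : C ≤ F)
    (hindep : AlgebraicIndependent F
      fun p : (Fin n × Fin n) × ℕ => d^[p.2] (Y.val p.1.1 p.1.2))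
    (hgen : diffAdjoin d F {x | ∃ i j, Y.val i j = x} = ⊤) (D : GL (Fin n) C) :
    ∃ σ, IsGaugeAut d F C Y D σ := by
  set v := fun p : (Fin n × Fin n) × ℕ => d^[p.2] (Y.val p.1.1 p.1.2) with hv
  have htop : IntermediateField.adjoin F (Set.range v) = ⊤ :=
    IntermediateField.toSubfield_injective (by rw [toSubfield_adjoin_range_iterate, hgen]; rfl)
  obtain ⟨σ, hσ⟩ := hindep.exists_algEquiv_aeval_eq htop
    (MvPolynomial.rightMulSubstEquiv (map (Subfield.inclusion hCF) D))
  have hσv : ∀ i j k, σ (v ((i, j), k)) = ∑ l, (D.val l j : L) * v ((i, l), k) := by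
    intro i j k
    have h := hσ (MvPolynomial.X ((i, j), k))
    simp only [MvPolynomial.rightMulSubstEquiv, AlgEquiv.ofAlgHom_apply,
      MvPolynomial.rightMulSubst_X, MvPolynomial.aeval_X, map_sum, map_mul,
      MvPolynomial.aeval_C] at h
    exact h
  have hdv : ∀ i j k, d (v ((i, j), k)) = v ((i, j), k + 1) :=
    fun i j k => (Function.iterate_succ_apply' d k _).symm
  refine ⟨σ.toRingEquiv, ?_, fun x hx => σ.commutes ⟨x, hx⟩, fun i j => ?_⟩
  · refine d.commute_of_closure_eq_top (τ := (σ : L →+* L))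
      (s := Set.range (algebraMap F L) ∪ Set.range v) ?_ ?_
    · rw [← IntermediateField.adjoin_toSubfield, htop, IntermediateField.top_toSubfield]
    rintro _ (⟨c, rfl⟩ | ⟨⟨⟨i, j⟩, k⟩, rfl⟩)
    · change σ (d c) = d (σ (algebraMap F L c))
      rw [σ.commutes]
      exact σ.commutes ⟨_, hFδ c c.2⟩
    -- `D` has constant entries, so `d` passes through `σ (v _) = ∑ l, D l j * v _`.
    · simp [hdv, hσv, Derivation.leibniz, hC]
  · simpa [hv, Matrix.mul_apply, mul_comm] using hσv i j 0

end GaugeAut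

theorem galois_group_of_general_equation_is_GL_general
    (L : Type*) [Field L] (δ : L → L)
    (hδadd : ∀ a b : L, δ (a + b) = δ a + δ b)
    (hδmul : ∀ a b : L, δ (a * b) = a * δ b + δ a * b)
    (F : Subfield L) (hFδ : ∀ x ∈ F, δ x ∈ F)
    (C : Subfield L) (hC : ∀ x : L, x ∈ C ↔ δ x = 0) (hCF : (C : Set L) ⊆ F)
    (n : ℕ) (Y : GL (Fin n) L)
    (hindep : AlgebraicIndependent F
      (fun p : (Fin n × Fin n) × ℕ => δ^[p.2] (Y.val p.1.1 p.1.2)))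
    (hgenL : diffAdjoin δ F {x | ∃ i j, Y.val i j = x} = ⊤)
    (A : Matrix (Fin n) (Fin n) L) (hA : A = (Y.val.map δ) * (Y⁻¹).val)
    (K : Subfield L) (hK : K = diffAdjoin δ F {x | ∃ i j, A i j = x}) :
    (∀ D : GL (Fin n) C, ∃! σ : L ≃+* L, IsGaugeAut δ F C Y D σ)
    ∧ (∀ (D : GL (Fin n) C) (σ : L ≃+* L), IsGaugeAut δ F C Y D σ → ∀ x ∈ K, σ x = x)
    ∧ (∀ σ : L ≃+* L, (∀ x : L, σ (δ x) = δ (σ x)) → (∀ x ∈ K, σ x = x) →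
        ∃! D : GL (Fin n) C, IsGaugeAut δ F C Y D σ)
    ∧ (∀ (D D' : GL (Fin n) C) (σ σ' σ'' : L ≃+* L),
        IsGaugeAut δ F C Y D σ → IsGaugeAut δ F C Y D' σ' →
        (∀ x : L, σ'' x = σ (σ' x)) → IsGaugeAut δ F C Y (D * D') σ'') := by
  obtain ⟨d, rfl⟩ : ∃ d : Derivation ℤ L L, ⇑d = δ := ⟨.ofAddLeibniz δ hδadd hδmul, rfl⟩
  subst hA hK
  have hCconst : ∀ x ∈ C, d x = 0 := fun x => (hC x).1
  refine ⟨fun D => ?_, fun D σ h => h.fixes_diffAdjoin_matrixLogDeriv hCconst,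
    fun σ hσ hfix => ?_, fun D D' σ σ' σ'' h h' hσ'' => ?_⟩
  · obtain ⟨σ, hσ⟩ := exists_isGaugeAut hFδ hCconst hCF hindep hgenL D
    exact ⟨σ, hσ, fun σ' hσ' => hσ'.unique_aut hgenL hσ⟩
  · obtain ⟨D, hD⟩ :=
      exists_isGaugeAut_of_fixes_diffAdjoin_matrixLogDeriv (fun x => (hC x).2) hσ hfix
    exact ⟨D, hD, fun D' hD' => hD'.unique_matrix hD⟩
  · rw [show σ'' = σ'.trans σ from RingEquiv.ext hσ'']
    exact h.trans hCF h'

/-- Let `F ⊆ L` be differential fields of characteristic zero whose constants `C` all lie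
in `F`, let `Y ∈ GLₙ(L)` have differentially algebraically independent entries over `F`
generating `L`, let `A = δ(Y)·Y⁻¹` and `K = F⟨entries of A⟩`.  Then:
(i) each `D ∈ GLₙ(C)` induces a unique differential automorphism `σ_D` of `L` over `F`
with `σ_D(Y) = Y·D`; (ii) each `σ_D` fixes `K` pointwise; (iii) every differential
automorphism of `L` fixing `K` pointwise is `σ_D` for a unique `D ∈ GLₙ(C)`; and
(iv) `D ↦ σ_D` is multiplicative, hence a group isomorphism `GLₙ(C) ≅ Gal^δ(L/K)`. -/
theorem galois_group_of_general_equation_is_GL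
    (L : Type*) [Field L] [CharZero L] (δ : L → L)
    (hδadd : ∀ a b : L, δ (a + b) = δ a + δ b)
    (hδmul : ∀ a b : L, δ (a * b) = a * δ b + δ a * b)
    (F : Subfield L) (hFδ : ∀ x ∈ F, δ x ∈ F)
    (C : Subfield L) (hC : ∀ x : L, x ∈ C ↔ δ x = 0) (hCF : (C : Set L) ⊆ F)
    (n : ℕ) (hn : 1 ≤ n) (Y : GL (Fin n) L)
    (hindep : AlgebraicIndependent F
      (fun p : (Fin n × Fin n) × ℕ => δ^[p.2] (Y.val p.1.1 p.1.2)))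
    (hgenL : diffAdjoin δ F {x | ∃ i j, Y.val i j = x} = ⊤)
    (A : Matrix (Fin n) (Fin n) L) (hA : A = (Y.val.map δ) * (Y⁻¹).val)
    (K : Subfield L) (hK : K = diffAdjoin δ F {x | ∃ i j, A i j = x}) :
    (∀ D : GL (Fin n) C, ∃! σ : L ≃+* L, IsGaugeAut δ F C Y D σ)
    ∧ (∀ (D : GL (Fin n) C) (σ : L ≃+* L), IsGaugeAut δ F C Y D σ → ∀ x ∈ K, σ x = x)
    ∧ (∀ σ : L ≃+* L, (∀ x : L, σ (δ x) = δ (σ x)) → (∀ x ∈ K, σ x = x) →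
        ∃! D : GL (Fin n) C, IsGaugeAut δ F C Y D σ)
    ∧ (∀ (D D' : GL (Fin n) C) (σ σ' σ'' : L ≃+* L),
        IsGaugeAut δ F C Y D σ → IsGaugeAut δ F C Y D' σ' →
        (∀ x : L, σ'' x = σ (σ' x)) → IsGaugeAut δ F C Y (D * D') σ'') :=
  galois_group_of_general_equation_is_GL_general L δ hδadd hδmul F hFδ C hC hCF n Y hindep hgenL A
    hA K hK
end

section
/- Let F₀ ⊆ F ⊆ L be differential field extensions of characteristic zero. Suppose there is an uncountable subset of F that is differentially algebraically independent over F₀, and let S ⊆ L be a countable subset. Then there exist uncountably many elements c ∈ F that are differentially transcendental over F₀⟨S⟩, i.e., such that the iterated derivatives c^{(i)}, i ≥ 0, are algebraically independent over F₀⟨S⟩. -/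
open Cardinal Set Matroid

namespace Matroid

variable {α : Type*} {M : Matroid α} {U : Set α}

theorem Indep.exists_contract_indep_sdiff [M.InvariantCardinalRank] (hU : M.Indep U)
    (C : Set α) : ∃ D ⊆ U, #D ≤ M.cRk C ∧ (M ／ C).Indep (U \ (D ∪ C)) := by
  obtain ⟨I, hI⟩ := M.exists_isBasis' C
  obtain ⟨J, hJ, hIJ⟩ := hI.indep.subset_isBasis'_of_subset (subset_union_right (s := U))
  obtain ⟨V, hV, hUV⟩ := hU.subset_isBasis'_of_subset (subset_union_left (t := I))
  have hJV : J \ V ⊆ I := fun x ⟨hxJ, hxV⟩ ↦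
    (hJ.subset hxJ).resolve_left fun hxU ↦ hxV (hUV hxU)
  refine ⟨U \ J, sdiff_subset, ?_, hI.contract_indep_iff.mpr ⟨hJ.indep.subset ?_, ?_⟩⟩
  · calc #(U \ J : Set α) ≤ #(V \ J : Set α) := mk_le_mk_of_subset (sdiff_subset_sdiff_left hUV)
      _ = #(J \ V : Set α) := hV.cardinalMk_sdiff_comm hJ
      _ ≤ #I := mk_le_mk_of_subset hJV
      _ = M.cRk C := hI.cardinalMk_eq_cRk
  · refine union_subset (fun x hx ↦ ?_) hIJ
    by_contra hxJ
    exact hx.2 (Or.inl ⟨hx.1, hxJ⟩)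
  · exact disjoint_left.mpr fun x hxC hx ↦ hx.2 (Or.inr hxC)

end Matroid

namespace AlgebraicIndependent

variable {k L ι : Type*} [Field k] [Field L] [Algebra k L] {x : ι → L} {A : Set L}

theorem adjoin_of_matroid_isBasis {I : Set L}
    (h : AlgebraicIndependent k (Sum.elim x ((↑) : I → L)))
    (hI : (matroid k L).IsBasis I A) :
    AlgebraicIndependent (IntermediateField.adjoin k A) x := by
  obtain ⟨-, hIA, hA⟩ := matroid_isBasis_iff.mp hI
  set K := IntermediateField.adjoin k I
  have hxK : AlgebraicIndependent K x := by
    rw [IntermediateField.algebraicIndependent_adjoin_iff, ← Subtype.range_coe (s := I)]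
    exact (sumElim_iff.mp h).2
  have : Algebra.IsAlgebraic K (IntermediateField.adjoin K A) :=
    IntermediateField.isAlgebraic_adjoin fun a ha ↦
      (IntermediateField.isAlgebraic_adjoin_iff.mpr (hA a ha)).isIntegral
  have hKA : (IntermediateField.adjoin K A).restrictScalars k = IntermediateField.adjoin k A := by
    rw [IntermediateField.adjoin_adjoin_left, union_eq_right.mpr hIA]
  have hxKA := hxK.extendScalars (IntermediateField.adjoin K A)
  rw [← hKA]
  exact hxKA

theorem adjoin_of_matroid_contract_indep (hx : Function.Injective x)
    (h : (matroid k L ／ A).Indep (range x)) :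
    AlgebraicIndependent (IntermediateField.adjoin k A) x := by
  obtain ⟨I, hI⟩ := (matroid k L).exists_isBasis A
  obtain ⟨hxI, hAx⟩ := hI.contract_indep_iff.mp h
  have hinj : Function.Injective (Sum.elim x ((↑) : I → L)) :=
    hx.sumElim Subtype.val_injective fun i a hia ↦
      hAx.notMem_of_mem_left (hI.subset a.2) (hia ▸ mem_range_self i)
  have hrange : range (Sum.elim x ((↑) : I → L)) ⊆ range x ∪ I := by
    rintro _ ⟨i | a, rfl⟩
    · exact Or.inl (mem_range_self i)
    · exact Or.inr a.2
  exact ((algebraicIndependent_subtype_range hinj).mp (hxI.mono hrange)).adjoin_of_matroid_isBasis hI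

end AlgebraicIndependent

theorem diffAdjoin_eq_adjoin_toSubfield {L : Type*} [Field L] (δ : L → L) (F : Subfield L)
    (S : Set L) : diffAdjoin δ F S =
      (IntermediateField.adjoin F {x | ∃ s ∈ S, ∃ m : ℕ, δ^[m] s = x}).toSubfield := by
  rw [IntermediateField.adjoin_toSubfield, diffAdjoin]
  congr
  exact Subtype.range_coe.symm

theorem Set.Countable.setOf_exists_iterate_eq {α : Type*} {S : Set α} (hS : S.Countable)
    (f : α → α) : {x | ∃ s ∈ S, ∃ m : ℕ, f^[m] s = x}.Countable := by
  have : {x | ∃ s ∈ S, ∃ m : ℕ, f^[m] s = x} = ⋃ s ∈ S, range (fun m : ℕ ↦ f^[m] s) := by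
    ext; simp
  rw [this]
  exact hS.biUnion fun s _ ↦ countable_range _

theorem uncountably_many_diff_transcendental_general
    (L : Type*) [Field L] (δ : L → L)
    (F₀ F : Subfield L)
    (hunc : ∃ T : Set L, T ⊆ F ∧ ¬ T.Countable ∧
      AlgebraicIndependent F₀ (fun p : T × ℕ => δ^[p.2] (p.1 : L)))
    (S : Set L) (hS : S.Countable) :
    ¬ Set.Countable {c : L | c ∈ F ∧
      AlgebraicIndependent (diffAdjoin δ F₀ S) (fun i : ℕ => δ^[i] c)} := by
  obtain ⟨T, hTF, hTunc, hT⟩ := hunc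
  set y : T × ℕ → L := fun p ↦ δ^[p.2] p.1
  set A := {x | ∃ s ∈ S, ∃ m : ℕ, δ^[m] s = x}
  have hA : A.Countable := hS.setOf_exists_iterate_eq δ
  set M := AlgebraicIndependent.matroid F₀ L
  obtain ⟨D, -, hD, hDA⟩ := Matroid.Indep.exists_contract_indep_sdiff (M := M)
    (U := range y) hT.to_subtype_range A
  have hDc : D.Countable := le_aleph0_iff_set_countable.mp
    (hD.trans ((M.cRk_le_cardinalMk A).trans (le_aleph0_iff_set_countable.mpr hA)))
  set B : Set T := Prod.fst '' (y ⁻¹' (D ∪ A))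
  have hB : B.Countable := ((hDc.union hA).preimage hT.injective).image _
  have hgood : ∀ t (ht : t ∈ T), ⟨t, ht⟩ ∉ B →
      AlgebraicIndependent (diffAdjoin δ F₀ S) (fun i : ℕ => δ^[i] t) := by
    intro t ht htB
    rw [diffAdjoin_eq_adjoin_toSubfield]
    refine AlgebraicIndependent.adjoin_of_matroid_contract_indep
      (hT.injective.comp (Prod.mk_right_injective (⟨t, ht⟩ : T))) (hDA.subset ?_)
    rintro _ ⟨n, rfl⟩
    exact ⟨⟨(⟨t, ht⟩, n), rfl⟩, fun h ↦ htB ⟨(⟨t, ht⟩, n), h, rfl⟩⟩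
  intro hc
  refine hTunc (((hB.image Subtype.val).union hc).mono fun t ht ↦ ?_)
  by_cases htB : ⟨t, ht⟩ ∈ B
  · exact Or.inl ⟨_, htB, rfl⟩
  · exact Or.inr ⟨hTF ht, hgood t ht htB⟩

/-- Let `F₀ ⊆ F ⊆ L` be differential fields of characteristic zero.  If `F` contains an
uncountable subset that is differentially algebraically independent over `F₀`, then for
every countable subset `S ⊆ L` there are uncountably many `c ∈ F` that are
differentially transcendental over `F₀⟨S⟩`. -/
theorem uncountably_many_diff_transcendental
    (L : Type*) [Field L] [CharZero L] (δ : L → L)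
    (hδadd : ∀ a b : L, δ (a + b) = δ a + δ b)
    (hδmul : ∀ a b : L, δ (a * b) = a * δ b + δ a * b)
    (F₀ F : Subfield L)
    (hF₀δ : ∀ x ∈ F₀, δ x ∈ F₀) (hFδ : ∀ x ∈ F, δ x ∈ F)
    (hF₀F : F₀ ≤ F)
    (hunc : ∃ T : Set L, T ⊆ F ∧ ¬ T.Countable ∧
      AlgebraicIndependent F₀ (fun p : T × ℕ => δ^[p.2] (p.1 : L)))
    (S : Set L) (hS : S.Countable) :
    ¬ Set.Countable {c : L | c ∈ F ∧
      AlgebraicIndependent (diffAdjoin δ F₀ S) (fun i : ℕ => δ^[i] c)} :=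
  uncountably_many_diff_transcendental_general L δ F₀ F hunc S hS
end

section
/- Let n ≥ 1, let E ⊆ Ω be differential fields of characteristic zero, let b₀, …, b_{n−1} ∈ E, and let c ∈ Ω be a nonzero element satisfying δ(c) = (1/n)·b_{n−1}·c. Then there exist elements c₀, …, c_{n−2} ∈ E such that every y ∈ Ω satisfying y^{(n)} + b_{n−1}·y^{(n−1)} + ⋯ + b₁·y^{(1)} + b₀·y = 0 also satisfies (cy)^{(n)} + c_{n−2}·(cy)^{(n−2)} + ⋯ + c₁·(cy)^{(1)} + c₀·(cy) = 0; that is, the exponential product transformation z = c·y eliminates the coefficient of z^{(n−1)} and produces an equation whose remaining coefficients lie in E. -/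
/-! Put `u = c⁻¹`. Then `δ u = β u` with `β = -b_{n-1}/n ∈ E`, hence `δ^k (u z) = u (δ + β)^k z`,
and by induction `(δ + β)^(k+1) = δ^(k+1) + (k+1) β δ^k + L` with `L` an operator of order `< k`
with coefficients in `E`. Substituting `y = u z` and dividing by `u`, the coefficient of
`z^(n-1)` becomes `n β + b_{n-1} = 0`. -/

open Submodule

namespace Derivation

variable {A : Type*} [CommRing A] (D : Derivation ℤ A A)

def twist (β : A) (z : A) : A := D z + β * z

theorem iterate_mul_eq_mul_iterate_twist {u β : A} (hu : D u = β * u) (k : ℕ) (z : A) :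
    D^[k] (u * z) = u * (D.twist β)^[k] z := by
  induction k generalizing z with
  | zero => rfl
  | succ k ih =>
    have hstep : D (u * z) = u * D.twist β z := by
      rw [leibniz, hu, twist, smul_eq_mul, smul_eq_mul]; ring
    rw [Function.iterate_succ_apply, Function.iterate_succ_apply, hstep, ih]

def diffOpLT (E : Subring A) (k : ℕ) : Submodule E (A → A) :=
  span E (Set.range fun i : Fin k => (⇑D)^[i])

variable {D} {E : Subring A}

theorem iterate_mem_diffOpLT {i k : ℕ} (h : i < k) : (⇑D)^[i] ∈ D.diffOpLT E k :=
  subset_span ⟨⟨i, h⟩, rfl⟩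

theorem diffOpLT_mono {k l : ℕ} (h : k ≤ l) : D.diffOpLT E k ≤ D.diffOpLT E l :=
  span_le.2 <| Set.range_subset_iff.2 fun i => iterate_mem_diffOpLT (i.2.trans_le h)

theorem comp_mem_diffOpLT_succ (hE : ∀ x ∈ E, D x ∈ E) {k : ℕ} {L : A → A}
    (hL : L ∈ D.diffOpLT E k) : ⇑D ∘ L ∈ D.diffOpLT E (k + 1) := by
  induction hL using span_induction with
  | mem _ h =>
    obtain ⟨i, rfl⟩ := h
    rw [← Function.iterate_succ']
    exact iterate_mem_diffOpLT (Nat.succ_lt_succ i.2)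
  | zero =>
    rw [show ⇑D ∘ (0 : A → A) = 0 from funext fun _ => D.map_zero]
    exact zero_mem _
  | add f g _ _ hf hg =>
    rw [show ⇑D ∘ (f + g) = ⇑D ∘ f + ⇑D ∘ g from funext fun _ => D.map_add _ _]
    exact add_mem hf hg
  | smul e f hf hDf =>
    have hsum : ⇑D ∘ (e • f) = e • (⇑D ∘ f) + (⟨D e, hE e e.2⟩ : E) • f := by
      ext z
      simp only [Subring.smul_def, Function.comp_apply, Pi.smul_apply, smul_eq_mul, leibniz,
        Pi.add_apply]
      ring
    rw [hsum]
    exact add_mem (smul_mem _ _ hDf) (smul_mem _ _ (diffOpLT_mono k.le_succ hf))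

theorem iterate_twist_succ_sub_mem_diffOpLT (hE : ∀ x ∈ E, D x ∈ E) {β : A} (hβ : β ∈ E)
    (k : ℕ) :
    (D.twist β)^[k + 1] - (⇑D)^[k + 1] - ((k + 1 : A) * β) • (⇑D)^[k] ∈ D.diffOpLT E k := by
  induction k with
  | zero =>
    convert zero_mem (D.diffOpLT E 0)
    ext z
    simp [twist]
  | succ k ih =>
    set L := (D.twist β)^[k + 1] - (⇑D)^[k + 1] - ((k + 1 : A) * β) • (⇑D)^[k]
    have hcoeff : (k + 1 : A) * (D β + β * β) ∈ E :=
      E.mul_mem (E.add_mem (natCast_mem E k) E.one_mem) (E.add_mem (hE β hβ) (E.mul_mem hβ hβ))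
    have hsplit :
        (D.twist β)^[k + 2] - (⇑D)^[k + 2] - ((↑(k + 1) + 1 : A) * β) • (⇑D)^[k + 1] =
          (⟨_, hcoeff⟩ : E) • (⇑D)^[k] + ⇑D ∘ L + (⟨β, hβ⟩ : E) • L := by
      ext z
      have hz : (D.twist β)^[k + 1] z = L z + D^[k + 1] z + (k + 1) * β * D^[k] z := by
        simp only [L, Pi.sub_apply, Pi.smul_apply, smul_eq_mul]
        ring
      simp only [Pi.sub_apply, Pi.add_apply, Pi.smul_apply, Function.comp_apply, smul_eq_mul,
        Subring.smul_def]
      rw [Function.iterate_succ_apply' _ (k + 1), hz, Function.iterate_succ_apply' _ (k + 1)]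
      simp only [twist, map_add, leibniz, smul_eq_mul, Function.iterate_succ_apply',
        map_natCast, map_one_eq_zero, Nat.cast_add, Nat.cast_one]
      ring
    rw [hsplit]
    exact add_mem (add_mem (smul_mem _ _ (iterate_mem_diffOpLT k.lt_succ_self))
      (comp_mem_diffOpLT_succ hE ih)) (smul_mem _ _ (diffOpLT_mono k.le_succ ih))

theorem iterate_twist_sub_iterate_mem_diffOpLT (hE : ∀ x ∈ E, D x ∈ E) {β : A} (hβ : β ∈ E)
    (k : ℕ) : (D.twist β)^[k] - (⇑D)^[k] ∈ D.diffOpLT E k := by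
  cases k with
  | zero => simp
  | succ k =>
    have hcoeff : (k + 1 : A) * β ∈ E :=
      E.mul_mem (E.add_mem (natCast_mem E k) E.one_mem) hβ
    have h := add_mem (diffOpLT_mono k.le_succ (iterate_twist_succ_sub_mem_diffOpLT hE hβ k))
      (smul_mem _ (⟨_, hcoeff⟩ : E) (iterate_mem_diffOpLT k.lt_succ_self))
    rwa [Subring.smul_def, sub_add_cancel] at h

theorem iterate_twist_mem_diffOpLT (hE : ∀ x ∈ E, D x ∈ E) {β : A} (hβ : β ∈ E) {i k : ℕ}
    (h : i < k) : (D.twist β)^[i] ∈ D.diffOpLT E k := by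
  simpa using add_mem (diffOpLT_mono h.le (iterate_twist_sub_iterate_mem_diffOpLT hE hβ i))
    (iterate_mem_diffOpLT h)

theorem twist_monic_sub_iterate_mem_diffOpLT (hE : ∀ x ∈ E, D x ∈ E) {m : ℕ}
    {b : Fin (m + 1) → A} (hb : ∀ i, b i ∈ E) {β : A} (hβ : β ∈ E)
    (hβb : (m + 1 : A) * β + b (Fin.last m) = 0) :
    (fun z => (D.twist β)^[m + 1] z + ∑ i, b i * (D.twist β)^[i] z) - (⇑D)^[m + 1] ∈
      D.diffOpLT E m := by
  have hsplit :
      (fun z => (D.twist β)^[m + 1] z + ∑ i, b i * (D.twist β)^[i] z) - (⇑D)^[m + 1] =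
        ((D.twist β)^[m + 1] - (⇑D)^[m + 1] - ((m + 1 : A) * β) • (⇑D)^[m]) +
          (⟨_, hb (Fin.last m)⟩ : E) • ((D.twist β)^[m] - (⇑D)^[m]) +
          ∑ i : Fin m, (⟨_, hb i.castSucc⟩ : E) • (D.twist β)^[i] := by
    ext z
    simp only [Fin.sum_univ_castSucc, Pi.sub_apply, Pi.add_apply, Pi.smul_apply, smul_eq_mul,
      Subring.smul_def, Finset.sum_apply, Fin.val_castSucc, Fin.val_last]
    linear_combination (⇑D)^[m] z * hβb
  rw [hsplit]
  exact add_mem (add_mem (iterate_twist_succ_sub_mem_diffOpLT hE hβ m)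
      (smul_mem _ _ (iterate_twist_sub_iterate_mem_diffOpLT hE hβ m)))
    (sum_mem fun i _ => smul_mem _ _ (iterate_twist_mem_diffOpLT hE hβ i.2))

end Derivation

/-- **Exponential product transformation.**  Let `E ⊆ Ω` be differential fields of
characteristic zero, `b₀, …, b_{n-1} ∈ E`, and let `c ∈ Ω` be nonzero with
`δ(c) = (1/n)·b_{n-1}·c`.  Then there are `c₀, …, c_{n-2} ∈ E` such that every solution
`y ∈ Ω` of `y⁽ⁿ⁾ + b_{n-1} y⁽ⁿ⁻¹⁾ + ⋯ + b₁ y⁽¹⁾ + b₀ y = 0` yields a solution `z = c·y`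
of `z⁽ⁿ⁾ + c_{n-2} z⁽ⁿ⁻²⁾ + ⋯ + c₁ z⁽¹⁾ + c₀ z = 0`: the transformation eliminates the
coefficient of `z⁽ⁿ⁻¹⁾` and the remaining coefficients lie in `E`. -/
theorem exponential_product_eliminates_subleading_coefficient
    (Ω : Type*) [Field Ω] [CharZero Ω] (δ : Ω → Ω)
    (hδadd : ∀ a b : Ω, δ (a + b) = δ a + δ b)
    (hδmul : ∀ a b : Ω, δ (a * b) = a * δ b + δ a * b)
    (E : Subfield Ω) (hEδ : ∀ x ∈ E, δ x ∈ E)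
    (n : ℕ) (hn : 1 ≤ n)
    (b : Fin n → Ω) (hb : ∀ i, b i ∈ E)
    (c : Ω) (hc : c ≠ 0)
    (hδc : δ c = (n : Ω)⁻¹ * b ⟨n - 1, by omega⟩ * c) :
    ∃ c' : Fin (n - 1) → Ω, (∀ i, c' i ∈ E) ∧
      ∀ y : Ω, δ^[n] y + ∑ i : Fin n, b i * δ^[(i : ℕ)] y = 0 →
        δ^[n] (c * y) + ∑ i : Fin (n - 1), c' i * δ^[(i : ℕ)] (c * y) = 0 := by
  obtain ⟨m, rfl⟩ : ∃ m, n = m + 1 := ⟨n - 1, by omega⟩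
  obtain ⟨D, rfl⟩ : ∃ D : Derivation ℤ Ω Ω, ⇑D = δ :=
    ⟨.mk' (AddMonoidHom.mk' δ hδadd).toIntLinearMap fun a b => by simp [hδmul, mul_comm], rfl⟩
  set β : Ω := -((m + 1 : Ω)⁻¹ * b (Fin.last m))
  have hm : (m + 1 : Ω) ≠ 0 := Nat.cast_add_one_ne_zero m
  have hβ : β ∈ E :=
    E.neg_mem (E.mul_mem (E.inv_mem (E.add_mem (natCast_mem E m) E.one_mem)) (hb _))
  have hβb : (m + 1 : Ω) * β + b (Fin.last m) = 0 := by
    rw [mul_neg, mul_inv_cancel_left₀ hm, neg_add_cancel]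
  have hu : D c⁻¹ = β * c⁻¹ := by
    rw [D.leibniz_inv, hδc, smul_eq_mul, Nat.cast_add_one]
    field_simp
    exact (eq_neg_of_add_eq_zero_left hβb).symm
  obtain ⟨a, ha⟩ := (mem_span_range_iff_exists_fun E.toSubring).1
    (D.twist_monic_sub_iterate_mem_diffOpLT (E := E.toSubring) hEδ hb hβ hβb)
  refine ⟨fun i => a i, fun i => (a i).2, fun y hy => ?_⟩
  have htwist (k : ℕ) : (D.twist β)^[k] (c * y) = c * D^[k] y := by
    have h := D.iterate_mul_eq_mul_iterate_twist hu k (c * y)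
    rw [inv_mul_cancel_left₀ hc] at h
    rw [h, mul_inv_cancel_left₀ hc]
  have hz : D^[m + 1] (c * y) + ∑ i, (a i : Ω) * D^[i] (c * y) =
      c * (D^[m + 1] y + ∑ i, b i * D^[i] y) := by
    have h := congr_fun ha (c * y)
    simp only [Finset.sum_apply, Pi.smul_apply, Subring.smul_def, smul_eq_mul, Pi.sub_apply,
      htwist, mul_left_comm (b _) c, ← Finset.mul_sum] at h
    linear_combination h
  exact hz.trans (by rw [hy, mul_zero])
end
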